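/- Suppose the polynomial Σ_{ℓ=-r}^p a_ℓ z^{ℓ+r} has exactly r roots (with multiplicity) in the punctured open unit disk. Then for every u ∈ ℝ there exists a unique sequence (v_j)_{j∈ℕ} with v_0 = … = v_{r-1} = −u, satisfying Σ_{ℓ=-r}^p a_ℓ v_{j+ℓ+r} = 0 for all j ≥ 0 and v_j → 0 at infinity; moreover v_j = u·w_j where (w_j) is the unique such sequence for u = 1, and v decays exponentially fast. -/

import Mathlib

/-!
Write `P(S)` for a polynomial evaluated at the shift `S v = v (· + 1)` on sequences, so that the
recurrence of the theorem reads `P(S) v = 0` for `P = ∑ a_ℓ X^(ℓ+r)`. Over `ℂ`, `P = c · R · Q`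
where `Q` collects the `r` roots in the open unit disk and `R` all the others. The solution of the
monic order-`r` recurrence `Q(S) v = 0` with prescribed first `r` values solves `P(S) v = 0`, and it
decays geometrically because all roots of `Q` are smaller than some `ρ < 1`. Conversely, if a
decaying `v` solves `P(S) v = 0`, then `Q(S) v` is a decaying solution of `R(S) y = 0`; peeling off
one root `|z| ≥ 1` at a time, `y (j + 1) = z y j` forces `y = 0`, so `v` is determined by its first
`r` values. Real solutions are the real parts of complex ones.
-/

open Polynomial Finset Filter Topology

def seqShift (R : Type*) [CommSemiring R] : Module.End R (ℕ → R) :=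
  LinearMap.funLeft R R (· + 1)

section CommSemiring
variable {R : Type*} [CommSemiring R]

lemma seqShift_pow_apply (n : ℕ) (v : ℕ → R) (j : ℕ) : (seqShift R ^ n) v j = v (j + n) := by
  induction n generalizing j with
  | zero => rfl
  | succ n ih =>
    rw [pow_succ', Module.End.mul_apply]
    exact (ih (j + 1)).trans (by rw [add_assoc, add_comm 1])

lemma aeval_seqShift_apply {P : R[X]} {N : ℕ} (hN : P.natDegree < N) (v : ℕ → R) (j : ℕ) :
    aeval (seqShift R) P v j = ∑ i ∈ range N, P.coeff i * v (j + i) := by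
  simp [aeval_eq_sum_range' hN, seqShift_pow_apply]

lemma aeval_seqShift_sum_C_mul_X_pow_apply {ι : Type*} (s : Finset ι) (c : ι → R) (k : ι → ℕ)
    (v : ℕ → R) (j : ℕ) :
    aeval (seqShift R) (∑ i ∈ s, C (c i) * X ^ k i) v j = ∑ i ∈ s, c i * v (j + k i) := by
  simp [seqShift_pow_apply]

lemma aeval_seqShift_map_apply {S : Type*} [CommSemiring S] (f : R →+* S) (P : R[X])
    (v : ℕ → R) (j : ℕ) :
    aeval (seqShift S) (P.map f) (f ∘ v) j = f (aeval (seqShift R) P v j) := by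
  rw [aeval_seqShift_apply (Nat.lt_succ_of_le natDegree_map_le),
    aeval_seqShift_apply (Nat.lt_succ_self _), map_sum]
  simp

end CommSemiring

section CommRing
variable {R : Type*} [CommRing R]

lemma aeval_seqShift_X_sub_C_apply (z : R) (v : ℕ → R) (j : ℕ) :
    aeval (seqShift R) (X - C z) v j = v (j + 1) - z * v j := by
  simp [seqShift, sub_eq_add_neg]

lemma aeval_seqShift_prod_cons_apply (z : R) (M : Multiset R) (v : ℕ → R) :
    aeval (seqShift R) ((z ::ₘ M).map fun w => X - C w).prod v
      = aeval (seqShift R) (M.map fun w => X - C w).prod (aeval (seqShift R) (X - C z) v) := by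
  rw [Multiset.map_cons, Multiset.prod_cons, mul_comm, aeval_mul, Module.End.mul_apply]

lemma tendsto_aeval_seqShift [TopologicalSpace R] [IsTopologicalRing R] (P : R[X]) {v : ℕ → R}
    (hv : Tendsto v atTop (𝓝 0)) :
    Tendsto (aeval (seqShift R) P v) atTop (𝓝 0) := by
  simp_rw [funext (aeval_seqShift_apply (Nat.lt_succ_self _) v)]
  simpa using tendsto_finsetSum _ fun i _ =>
    (hv.comp (tendsto_add_atTop_nat i)).const_mul (P.coeff i)

def monicRecurrence (Q : R[X]) : LinearRecurrence R := ⟨Q.natDegree, fun i => -Q.coeff i⟩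

lemma aeval_seqShift_eq_zero_iff_isSolution {Q : R[X]} (hQ : Q.Monic) (v : ℕ → R) :
    aeval (seqShift R) Q v = 0 ↔ (monicRecurrence Q).IsSolution v := by
  simp only [funext_iff, LinearRecurrence.IsSolution, monicRecurrence, Pi.zero_apply,
    aeval_seqShift_apply (Nat.lt_succ_self _), sum_range_succ, hQ.coeff_natDegree, one_mul,
    neg_mul, sum_neg_distrib]
  refine forall_congr' fun n => ?_
  show _ ↔ v (n + Q.natDegree) = -∑ i : Fin Q.natDegree, Q.coeff i * v (n + i)
  rw [add_comm, add_eq_zero_iff_eq_neg, Fin.sum_univ_eq_sum_range (fun i => Q.coeff i * v (n + i))]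

lemma exists_aeval_seqShift_eq_zero_of_monic {Q : R[X]} (hQ : Q.Monic) (init : ℕ → R) :
    ∃ v : ℕ → R, (∀ j < Q.natDegree, v j = init j) ∧ aeval (seqShift R) Q v = 0 :=
  ⟨(monicRecurrence Q).mkSol fun i => init i,
    fun j hj => (monicRecurrence Q).mkSol_eq_init _ ⟨j, hj⟩,
    (aeval_seqShift_eq_zero_iff_isSolution hQ _).2 ((monicRecurrence Q).is_sol_mkSol _)⟩

lemma eq_zero_of_aeval_seqShift_eq_zero_of_monic {Q : R[X]} (hQ : Q.Monic) {v : ℕ → R}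
    (hv : aeval (seqShift R) Q v = 0) (hinit : ∀ j < Q.natDegree, v j = 0) : v = 0 := by
  refine ((monicRecurrence Q).eq_iff_eqOn_range_order v 0
    ((aeval_seqShift_eq_zero_iff_isSolution hQ v).1 hv)
    ((aeval_seqShift_eq_zero_iff_isSolution hQ 0).1 (map_zero _))).2 fun j hj => ?_
  exact hinit j (mem_range.1 hj)

end CommRing

section NormedField
variable {𝕜 : Type*} [NormedField 𝕜]

lemma norm_le_geometric_of_norm_succ_sub_mul_le {z : 𝕜} {ρ C : ℝ} (hz : ‖z‖ < ρ) {v : ℕ → 𝕜}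
    (hv : ∀ j, ‖v (j + 1) - z * v j‖ ≤ C * ρ ^ j) (j : ℕ) :
    ‖v j‖ ≤ (‖v 0‖ + C / (ρ - ‖z‖)) * ρ ^ j := by
  have hρz : 0 < ρ - ‖z‖ := sub_pos.2 hz
  have hρ : 0 < ρ := (norm_nonneg z).trans_lt hz
  have hC : 0 ≤ C := by simpa using (norm_nonneg _).trans (hv 0)
  set K := ‖v 0‖ + C / (ρ - ‖z‖)
  have hCK : C ≤ (ρ - ‖z‖) * K := by
    rw [mul_add, mul_div_cancel₀ _ hρz.ne']
    nlinarith [norm_nonneg (v 0)]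
  induction j with
  | zero => simpa [K] using div_nonneg hC hρz.le
  | succ j ih =>
    calc ‖v (j + 1)‖ ≤ ‖z‖ * ‖v j‖ + ‖v (j + 1) - z * v j‖ := by
          simpa [norm_mul] using norm_le_insert' (v (j + 1)) (z * v j)
      _ ≤ ‖z‖ * (K * ρ ^ j) + C * ρ ^ j := by gcongr; exact hv j
      _ ≤ K * ρ ^ (j + 1) := by
          have := pow_pos hρ j
          rw [pow_succ]; nlinarith

lemma exists_norm_le_geometric_of_aeval_seqShift_prod_eq_zero {M : Multiset 𝕜} {ρ : ℝ}
    (hM : ∀ z ∈ M, ‖z‖ < ρ) {v : ℕ → 𝕜}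
    (hv : aeval (seqShift 𝕜) (M.map fun z => X - C z).prod v = 0) :
    ∃ K, ∀ j, ‖v j‖ ≤ K * ρ ^ j := by
  induction M using Multiset.induction_on generalizing v with
  | empty => exact ⟨0, fun j => by simp_all⟩
  | cons z M ih =>
    rw [aeval_seqShift_prod_cons_apply] at hv
    obtain ⟨K, hK⟩ := ih (fun w hw => hM w (Multiset.mem_cons_of_mem hw)) hv
    exact ⟨_, norm_le_geometric_of_norm_succ_sub_mul_le (hM z (Multiset.mem_cons_self z M))
      fun j => aeval_seqShift_X_sub_C_apply z v j ▸ hK j⟩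

lemma eq_zero_of_tendsto_of_succ_eq_mul {z : 𝕜} (hz : 1 ≤ ‖z‖) {v : ℕ → 𝕜}
    (hv : ∀ j, v (j + 1) = z * v j) (hlim : Tendsto v atTop (𝓝 0)) : v = 0 := by
  have hpow : ∀ j, v j = z ^ j * v 0 := fun j => by
    induction j with
    | zero => simp
    | succ j ih => rw [hv, ih, pow_succ']; ring
  have hle : ∀ j, ‖v 0‖ ≤ ‖v j‖ := fun j => by
    rw [hpow j, norm_mul, norm_pow]
    exact le_mul_of_one_le_left (norm_nonneg _) (one_le_pow₀ hz)
  have h0 : v 0 = 0 :=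
    norm_le_zero_iff.1 (ge_of_tendsto (by simpa using hlim.norm) (Eventually.of_forall hle))
  funext j
  rw [hpow j, h0, mul_zero, Pi.zero_apply]

lemma eq_zero_of_tendsto_of_aeval_seqShift_prod_eq_zero {M : Multiset 𝕜} (hM : ∀ z ∈ M, 1 ≤ ‖z‖)
    {v : ℕ → 𝕜} (hv : aeval (seqShift 𝕜) (M.map fun z => X - C z).prod v = 0)
    (hlim : Tendsto v atTop (𝓝 0)) : v = 0 := by
  induction M using Multiset.induction_on generalizing v with
  | empty => simpa using hv
  | cons z M ih =>
    rw [aeval_seqShift_prod_cons_apply] at hv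
    have hstep := ih (fun w hw => hM w (Multiset.mem_cons_of_mem hw)) hv
      (tendsto_aeval_seqShift _ hlim)
    refine eq_zero_of_tendsto_of_succ_eq_mul (hM z (Multiset.mem_cons_self z M)) (fun j => ?_) hlim
    rw [← sub_eq_zero, ← aeval_seqShift_X_sub_C_apply, hstep, Pi.zero_apply]

lemma exists_forall_norm_lt_of_forall_norm_lt_one {M : Multiset 𝕜} (hM : ∀ z ∈ M, ‖z‖ < 1) :
    ∃ ρ : ℝ, 0 < ρ ∧ ρ < 1 ∧ ∀ z ∈ M, ‖z‖ < ρ := by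
  have hnhds : ∀ᶠ ρ in 𝓝 (1 : ℝ), 0 < ρ ∧ ∀ z ∈ M, ‖z‖ < ρ :=
    (eventually_gt_nhds one_pos).and <| (M.finite_toSet.eventually_all).2 fun z hz =>
      eventually_gt_nhds (hM z hz)
  obtain ⟨ρ, ⟨h0, hz⟩, h1⟩ :=
    ((hnhds.filter_mono nhdsWithin_le_nhds).and self_mem_nhdsWithin).exists (f := 𝓝[<] 1)
  exact ⟨ρ, h0, h1, hz⟩

end NormedField

section Factorization
variable {𝕜 : Type*} [NormedField 𝕜]

noncomputable def stableFactor (P : 𝕜[X]) : 𝕜[X] :=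
  ((P.roots.filter fun z => ‖z‖ < 1).map fun z => X - C z).prod

noncomputable def unstableFactor (P : 𝕜[X]) : 𝕜[X] :=
  ((P.roots.filter fun z => ¬‖z‖ < 1).map fun z => X - C z).prod

lemma monic_stableFactor (P : 𝕜[X]) : (stableFactor P).Monic :=
  monic_multiset_prod_of_monic _ _ fun z _ => monic_X_sub_C z

lemma natDegree_stableFactor (P : 𝕜[X]) :
    (stableFactor P).natDegree = (P.roots.filter fun z => ‖z‖ < 1).card :=
  natDegree_multiset_prod_X_sub_C_eq_card _

lemma eq_C_leadingCoeff_mul_unstableFactor_mul_stableFactor [IsAlgClosed 𝕜] (P : 𝕜[X]) :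
    P = C P.leadingCoeff * unstableFactor P * stableFactor P := by
  conv_lhs => rw [(IsAlgClosed.splits P).eq_prod_roots,
    ← Multiset.filter_add_not (fun z => ‖z‖ < 1) P.roots, Multiset.map_add, Multiset.prod_add]
  rw [stableFactor, unstableFactor]
  ring

variable [IsAlgClosed 𝕜]

theorem exists_decaying_solution (P : 𝕜[X]) (init : ℕ → 𝕜) :
    ∃ v : ℕ → 𝕜, (∀ j < (P.roots.filter fun z => ‖z‖ < 1).card, v j = init j) ∧
      aeval (seqShift 𝕜) P v = 0 ∧
      ∃ K > 0, ∃ ρ : ℝ, 0 < ρ ∧ ρ < 1 ∧ ∀ j, ‖v j‖ ≤ K * ρ ^ j := by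
  obtain ⟨v, hinit, hv⟩ := exists_aeval_seqShift_eq_zero_of_monic (monic_stableFactor P) init
  obtain ⟨ρ, hρ0, hρ1, hρ⟩ := exists_forall_norm_lt_of_forall_norm_lt_one
    (M := P.roots.filter fun z => ‖z‖ < 1) fun z hz => (Multiset.mem_filter.1 hz).2
  obtain ⟨K, hK⟩ := exists_norm_le_geometric_of_aeval_seqShift_prod_eq_zero hρ hv
  refine ⟨v, natDegree_stableFactor P ▸ hinit, ?_, max K 1, by positivity, ρ, hρ0, hρ1,
    fun j => (hK j).trans ?_⟩
  · rw [eq_C_leadingCoeff_mul_unstableFactor_mul_stableFactor P, aeval_mul, Module.End.mul_apply,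
      hv, map_zero]
  · gcongr
    exact le_max_left K 1

theorem eq_zero_of_decaying_solution {P : 𝕜[X]} (hP : P ≠ 0) {v : ℕ → 𝕜}
    (hv : aeval (seqShift 𝕜) P v = 0) (hlim : Tendsto v atTop (𝓝 0))
    (hinit : ∀ j < (P.roots.filter fun z => ‖z‖ < 1).card, v j = 0) : v = 0 := by
  have hunstable :
      aeval (seqShift 𝕜) (unstableFactor P) (aeval (seqShift 𝕜) (stableFactor P) v) = 0 := by
    rw [eq_C_leadingCoeff_mul_unstableFactor_mul_stableFactor P, aeval_mul, aeval_mul, aeval_C,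
      Module.End.mul_apply, Module.End.mul_apply, Module.algebraMap_end_apply] at hv
    exact (smul_eq_zero.1 hv).resolve_left (leadingCoeff_ne_zero.2 hP)
  have hstable := eq_zero_of_tendsto_of_aeval_seqShift_prod_eq_zero
    (fun z hz => not_lt.1 (Multiset.mem_filter.1 hz).2) hunstable (tendsto_aeval_seqShift _ hlim)
  exact eq_zero_of_aeval_seqShift_eq_zero_of_monic (monic_stableFactor P) hstable
    (natDegree_stableFactor P ▸ hinit)

end Factorization

lemma re_aeval_seqShift_map_ofReal (P : ℝ[X]) (w : ℕ → ℂ) (j : ℕ) :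
    (aeval (seqShift ℂ) (P.map Complex.ofRealHom) w j).re
      = aeval (seqShift ℝ) P (fun k => (w k).re) j := by
  rw [aeval_seqShift_apply (Nat.lt_succ_of_le natDegree_map_le),
    aeval_seqShift_apply (Nat.lt_succ_self _), Complex.re_sum]
  simp

theorem exists_decaying_real_solution (P : ℝ[X]) (init : ℕ → ℝ) :
    ∃ v : ℕ → ℝ,
      (∀ j < ((P.map Complex.ofRealHom).roots.filter fun z => ‖z‖ < 1).card, v j = init j) ∧
      aeval (seqShift ℝ) P v = 0 ∧
      ∃ K > 0, ∃ ρ : ℝ, 0 < ρ ∧ ρ < 1 ∧ ∀ j, |v j| ≤ K * ρ ^ j := by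
  obtain ⟨w, hinit, hw, K, hK, ρ, hρ0, hρ1, hwρ⟩ :=
    exists_decaying_solution (P.map Complex.ofRealHom) fun j => (init j : ℂ)
  refine ⟨fun j => (w j).re, fun j hj => by simp [hinit j hj], funext fun j => ?_,
    K, hK, ρ, hρ0, hρ1, fun j => (Complex.abs_re_le_norm (w j)).trans (hwρ j)⟩
  rw [← re_aeval_seqShift_map_ofReal, hw]
  rfl

theorem eq_of_decaying_real_solutions {P : ℝ[X]} (hP : P ≠ 0) {v v' : ℕ → ℝ}
    (hv : aeval (seqShift ℝ) P v = 0) (hv' : aeval (seqShift ℝ) P v' = 0)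
    (hlim : Tendsto v atTop (𝓝 0)) (hlim' : Tendsto v' atTop (𝓝 0))
    (hinit : ∀ j < ((P.map Complex.ofRealHom).roots.filter fun z => ‖z‖ < 1).card, v j = v' j) :
    v = v' := by
  have hsol : aeval (seqShift ℂ) (P.map Complex.ofRealHom) (Complex.ofRealHom ∘ (v - v')) = 0 :=
    funext fun j => by rw [aeval_seqShift_map_apply, map_sub, hv, hv', sub_zero]; simp
  have hdiff : Tendsto (v - v') atTop (𝓝 0) := sub_zero (0 : ℝ) ▸ hlim.sub hlim'
  have hzero := eq_zero_of_decaying_solution (Polynomial.map_ne_zero hP) hsol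
    ((Complex.continuous_ofReal.tendsto' 0 0 Complex.ofReal_zero).comp hdiff)
    fun j hj => by simp [hinit j hj]
  funext j
  simpa [sub_eq_zero] using congrFun hzero j

lemma coeff_zero_sum_Icc_C_mul_X_pow_toNat {R : Type*} [Semiring R] (r p : ℕ) (a : ℤ → R) :
    (∑ ℓ ∈ Icc (-(r : ℤ)) p, C (a ℓ) * X ^ (ℓ + r).toNat).coeff 0 = a (-r) := by
  rw [finsetSum_coeff, sum_eq_single (-(r : ℤ))]
  · simp
  · intro ℓ hℓ hne
    rw [coeff_C_mul_X_pow, if_neg]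
    rw [mem_Icc] at hℓ
    omega
  · intro h
    simp at h

lemma filter_roots_and_ne_zero {R : Type*} [CommRing R] [IsDomain R] {P : R[X]}
    (h : P.coeff 0 ≠ 0) (q : R → Prop) [DecidablePred q] [DecidablePred fun z => q z ∧ z ≠ 0] :
    P.roots.filter (fun z => q z ∧ z ≠ 0) = P.roots.filter q := by
  refine Multiset.filter_congr fun z hz => and_iff_left_of_imp fun _ hz0 => h ?_
  have hroot : P.IsRoot 0 := hz0 ▸ (mem_roots'.1 hz).2
  rwa [coeff_zero_eq_eval_zero]

theorem stmt9_general (r p : ℕ) (a : ℤ → ℝ)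
    (har : a (-(r : ℤ)) ≠ 0)
    (hcount : Multiset.card
      ((∑ ℓ ∈ Finset.Icc (-(r : ℤ)) (p : ℤ),
          Polynomial.C (a ℓ : ℂ) * Polynomial.X ^ (ℓ + r).toNat).roots.filter
        (fun z => ‖z‖ < 1 ∧ z ≠ 0)) = r) :
    ∃ w : ℕ → ℝ,
      -- w is the boundary layer profile associated with u = 1
      (∀ j : ℕ, j < r → w j = -1) ∧
      (∀ j : ℕ, ∑ ℓ ∈ Finset.Icc (-(r : ℤ)) (p : ℤ), a ℓ * w (j + (ℓ + r).toNat) = 0) ∧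
      Filter.Tendsto w Filter.atTop (nhds 0) ∧
      -- w decays exponentially fast
      (∃ C > 0, ∃ ρ : ℝ, 0 < ρ ∧ ρ < 1 ∧ ∀ j : ℕ, |w j| ≤ C * ρ ^ j) ∧
      -- for every u, u·w is the unique boundary layer profile associated with u
      (∀ u : ℝ,
        ((∀ j : ℕ, j < r → u * w j = -u) ∧
         (∀ j : ℕ, ∑ ℓ ∈ Finset.Icc (-(r : ℤ)) (p : ℤ),
            a ℓ * (u * w (j + (ℓ + r).toNat)) = 0) ∧
         Filter.Tendsto (fun j => u * w j) Filter.atTop (nhds 0)) ∧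
        (∀ v : ℕ → ℝ,
          (∀ j : ℕ, j < r → v j = -u) →
          (∀ j : ℕ, ∑ ℓ ∈ Finset.Icc (-(r : ℤ)) (p : ℤ),
            a ℓ * v (j + (ℓ + r).toNat) = 0) →
          Filter.Tendsto v Filter.atTop (nhds 0) →
          ∀ j : ℕ, v j = u * w j)) := by
  set P : ℝ[X] := ∑ ℓ ∈ Icc (-(r : ℤ)) p, C (a ℓ) * X ^ (ℓ + r).toNat with hPdef
  have hrec : ∀ v : ℕ → ℝ, (∀ j, ∑ ℓ ∈ Icc (-(r : ℤ)) p, a ℓ * v (j + (ℓ + r).toNat) = 0) ↔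
      aeval (seqShift ℝ) P v = 0 := fun v => by
    simp only [funext_iff, hPdef, aeval_seqShift_sum_C_mul_X_pow_apply, Pi.zero_apply]
  have hP0 : P.coeff 0 ≠ 0 := by rwa [coeff_zero_sum_Icc_C_mul_X_pow_toNat]
  have hm : ((P.map Complex.ofRealHom).roots.filter fun z => ‖z‖ < 1).card = r := by
    rw [← filter_roots_and_ne_zero (by simpa using hP0), ← hcount]
    simp [hPdef, Polynomial.map_sum]
  obtain ⟨w, hw0, hw, C, hC, ρ, hρ0, hρ1, hwρ⟩ := exists_decaying_real_solution P fun _ => -1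
  rw [hm] at hw0
  have hwlim : Tendsto w atTop (𝓝 0) := squeeze_zero_norm hwρ
    (by simpa using (tendsto_pow_atTop_nhds_zero_of_lt_one hρ0.le hρ1).const_mul C)
  have huw : ∀ u : ℝ, aeval (seqShift ℝ) P (fun j => u * w j) = 0 := fun u => by
    rw [show (fun j => u * w j) = u • w from rfl, map_smul, hw, smul_zero]
  refine ⟨w, hw0, (hrec w).2 hw, hwlim, ⟨C, hC, ρ, hρ0, hρ1, hwρ⟩,
    fun u => ⟨⟨fun j hj => by rw [hw0 j hj]; ring, (hrec _).2 (huw u),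
      by simpa using hwlim.const_mul u⟩, fun v hv0 hv hvlim => congrFun ?_⟩⟩
  have hP : P ≠ 0 := fun h => hP0 (by rw [h, coeff_zero])
  refine eq_of_decaying_real_solutions hP ((hrec v).1 hv)
    (huw u) hvlim (by simpa using hwlim.const_mul u) fun j hj => ?_
  rw [hm] at hj
  rw [hv0 j hj, hw0 j hj]
  ring

/-- if the characteristic polynomial has exactly r roots (with multiplicity)
in the punctured open unit disk, then for every u there is a unique boundary layer
profile associated with u; it is u·w where w is the profile for u = 1, and it decays
exponentially fast. -/
theorem stmt9 (r p : ℕ) (hr : 1 ≤ r) (a : ℤ → ℝ)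
    (har : a (-(r : ℤ)) ≠ 0) (hap : a p ≠ 0)
    (hcount : Multiset.card
      ((∑ ℓ ∈ Finset.Icc (-(r : ℤ)) (p : ℤ),
          Polynomial.C (a ℓ : ℂ) * Polynomial.X ^ (ℓ + r).toNat).roots.filter
        (fun z => ‖z‖ < 1 ∧ z ≠ 0)) = r) :
    ∃ w : ℕ → ℝ,
      -- w is the boundary layer profile associated with u = 1
      (∀ j : ℕ, j < r → w j = -1) ∧
      (∀ j : ℕ, ∑ ℓ ∈ Finset.Icc (-(r : ℤ)) (p : ℤ), a ℓ * w (j + (ℓ + r).toNat) = 0) ∧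
      Filter.Tendsto w Filter.atTop (nhds 0) ∧
      -- w decays exponentially fast
      (∃ C > 0, ∃ ρ : ℝ, 0 < ρ ∧ ρ < 1 ∧ ∀ j : ℕ, |w j| ≤ C * ρ ^ j) ∧
      -- for every u, u·w is the unique boundary layer profile associated with u
      (∀ u : ℝ,
        ((∀ j : ℕ, j < r → u * w j = -u) ∧
         (∀ j : ℕ, ∑ ℓ ∈ Finset.Icc (-(r : ℤ)) (p : ℤ),
            a ℓ * (u * w (j + (ℓ + r).toNat)) = 0) ∧
         Filter.Tendsto (fun j => u * w j) Filter.atTop (nhds 0)) ∧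
        (∀ v : ℕ → ℝ,
          (∀ j : ℕ, j < r → v j = -u) →
          (∀ j : ℕ, ∑ ℓ ∈ Finset.Icc (-(r : ℤ)) (p : ℤ),
            a ℓ * v (j + (ℓ + r).toNat) = 0) →
          Filter.Tendsto v Filter.atTop (nhds 0) →
          ∀ j : ℕ, v j = u * w j)) :=
  stmt9_general r p a har hcount
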